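/- Let q(t) = exp(tH)·I_{n,k} with H = [[A, -Bᵀ],[B, 0]] skew-symmetric as above, let [I_{n,k}, q(1)] = UR be a (compact) QR decomposition with U ∈ ℝ^{n×2k} having orthonormal columns, and suppose span{q(0)} ∩ span{q(1)} = {0}. Then φ(t) := Uᵀq(t) satisfies U·φ(t) = q(t) for all t ∈ [0,1], and φ(t) has orthonormal columns for each t. -/

import Mathlib

/-!
The subspace `span{I_{n,k}, H I_{n,k}}` is `H`-invariant, since
`H [I_{n,k}, H I_{n,k}] = [I_{n,k}, H I_{n,k}] [[0, -BᵀB], [1, A]]`; hence it is invariant under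
`exp(tH)` and contains every `q(t)`. It has dimension at most `2k` and contains
`span q(0) ⊕ span q(1)`, which has dimension `2k` because `q(0)`, `q(1)` have orthonormal columns
(`H` is skew) and their spans meet trivially. So all `q(t)` lie in `span q(0) + span q(1) ⊆ span U`,
and `U Uᵀ` is the identity there.
-/

open Matrix NormedSpace

/-- The column span of a matrix. -/
def colSpan {m' k' : Type*} [Fintype k'] (M : Matrix m' k' ℝ) : Submodule ℝ (m' → ℝ) :=
  LinearMap.range M.mulVecLin

namespace Matrix

open scoped Norms.Operator in
theorem exp_mul_eq_mul_exp_of_mul_eq {n p : Type*} [Fintype n] [DecidableEq n] [Fintype p]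
    [DecidableEq p] {M : Matrix n n ℝ} {N : Matrix p p ℝ} {P : Matrix n p ℝ}
    (h : M * P = P * N) : exp M * P = P * exp N := by
  have hpow (j : ℕ) : M ^ j * P = P * N ^ j := by
    induction j with
    | zero => simp
    | succ j ih =>
      rw [pow_succ, Matrix.mul_assoc, h, ← Matrix.mul_assoc, ih, Matrix.mul_assoc, ← pow_succ]
  have hM := (exp_series_hasSum_exp' (𝕂 := ℝ) M).mapL
    (mulRightLinearMap n ℝ P).toContinuousLinearMap
  have hN := (exp_series_hasSum_exp' (𝕂 := ℝ) N).mapL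
    (mulLeftLinearMap p ℝ P).toContinuousLinearMap
  simp only [LinearMap.coe_toContinuousLinearMap', mulRightLinearMap_apply,
    mulLeftLinearMap_apply, Matrix.smul_mul, Matrix.mul_smul, ← hpow] at hM hN
  exact hM.unique hN

theorem exp_transpose_mul_exp_of_transpose_eq_neg {n : Type*} [Fintype n] [DecidableEq n]
    {H : Matrix n n ℝ} (hH : Hᵀ = -H) : (exp H)ᵀ * exp H = 1 := by
  rw [← exp_transpose, hH, exp_neg, nonsing_inv_mul _ ((isUnit_exp H).map detMonoidHom)]

theorem transpose_mul_self_mul_eq_one {m n : Type*} [Fintype m] [DecidableEq m] [Fintype n]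
    [DecidableEq n] {Q : Matrix m m ℝ} {X : Matrix m n ℝ} (hQ : Qᵀ * Q = 1) (hX : Xᵀ * X = 1) :
    (Q * X)ᵀ * (Q * X) = 1 := by
  rw [transpose_mul, Matrix.mul_assoc, ← Matrix.mul_assoc Qᵀ, hQ, Matrix.one_mul, hX]

theorem rank_eq_card_of_transpose_mul_self_eq_one {m n : Type*} [Fintype m] [Fintype n]
    [DecidableEq n] {X : Matrix m n ℝ} (hX : Xᵀ * X = 1) : X.rank = Fintype.card n := by
  rw [← rank_transpose_mul_self, hX, rank_one]

theorem of_ite_eq_inl_eq_fromRows {κ μ : Type*} [DecidableEq κ] [DecidableEq μ] :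
    (of fun i j => if i = Sum.inl j then 1 else 0 : Matrix (κ ⊕ μ) κ ℝ) = fromRows 1 0 := by
  ext (i | i) j <;> simp [one_apply]

theorem fromBlocks_transpose_eq_neg {κ μ : Type*} {A : Matrix κ κ ℝ} (hA : Aᵀ = -A)
    (B : Matrix μ κ ℝ) : (fromBlocks A (-Bᵀ) B 0)ᵀ = -fromBlocks A (-Bᵀ) B 0 := by
  simp [fromBlocks_transpose, fromBlocks_neg, hA]

theorem fromBlocks_mul_fromCols_fromRows {κ μ : Type*} [Fintype κ] [Fintype μ] [DecidableEq κ]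
    (A : Matrix κ κ ℝ) (B : Matrix μ κ ℝ) :
    fromBlocks A (-Bᵀ) B 0 * fromCols (fromRows (1 : Matrix κ κ ℝ) 0) (fromRows A B) =
      fromCols (fromRows (1 : Matrix κ κ ℝ) 0) (fromRows A B) * fromBlocks 0 (-(Bᵀ * B)) 1 A := by
  simp only [fromCols_fromRows_eq_fromBlocks, fromBlocks_multiply]
  congr 1 <;> simp [add_comm]

end Matrix

theorem Submodule.le_sup_of_inf_eq_bot_of_finrank_le {K V : Type*} [DivisionRing K]
    [AddCommGroup V] [Module K V] [FiniteDimensional K V] {S W₁ W₂ : Submodule K V}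
    (h₁ : W₁ ≤ S) (h₂ : W₂ ≤ S) (h : W₁ ⊓ W₂ = ⊥)
    (hS : Module.finrank K S ≤ Module.finrank K W₁ + Module.finrank K W₂) : S ≤ W₁ ⊔ W₂ := by
  have hsup := Submodule.finrank_sup_add_finrank_inf_eq W₁ W₂
  rw [h, finrank_bot, add_zero] at hsup
  exact (Submodule.eq_of_le_of_finrank_le (sup_le h₁ h₂) (hsup ▸ hS)).ge

section ColSpan

variable {m n p : Type*} [Fintype n] [Fintype p]

theorem colSpan_mul_le (X : Matrix m n ℝ) (Y : Matrix n p ℝ) : colSpan (X * Y) ≤ colSpan X := by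
  rw [colSpan, colSpan, mulVecLin_mul]
  exact LinearMap.range_comp_le_range _ _

theorem finrank_colSpan (X : Matrix m n ℝ) : Module.finrank ℝ (colSpan X) = X.rank := rfl

theorem colSpan_sup_colSpan_le_fromCols [DecidableEq n] [DecidableEq p] (X : Matrix m n ℝ)
    (Y : Matrix m p ℝ) : colSpan X ⊔ colSpan Y ≤ colSpan (fromCols X Y) := by
  refine sup_le ?_ ?_
  · have h := colSpan_mul_le (fromCols X Y) (fromRows (1 : Matrix n n ℝ) 0)
    rwa [fromCols_mul_fromRows, Matrix.mul_one, Matrix.mul_zero, add_zero] at h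
  · have h := colSpan_mul_le (fromCols X Y) (fromRows 0 (1 : Matrix p p ℝ))
    rwa [fromCols_mul_fromRows, Matrix.mul_one, Matrix.mul_zero, zero_add] at h

theorem colSpan_exp_mul_le [Fintype m] [DecidableEq n] [DecidableEq p] {H : Matrix n n ℝ}
    {K : Matrix n p ℝ} {C : Matrix p p ℝ} (hK : H * K = K * C) (X : Matrix p m ℝ) :
    colSpan (exp H * (K * X)) ≤ colSpan K := by
  rw [← Matrix.mul_assoc, exp_mul_eq_mul_exp_of_mul_eq hK, Matrix.mul_assoc]
  exact colSpan_mul_le _ _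

theorem mul_transpose_mul_eq_self_of_colSpan_le [Fintype m] [DecidableEq n] {U : Matrix m n ℝ}
    {X : Matrix m p ℝ} (hU : Uᵀ * U = 1) (hX : colSpan X ≤ colSpan U) : U * (Uᵀ * X) = X := by
  refine ext_iff_mulVec.2 fun v => ?_
  obtain ⟨w, hw⟩ : X *ᵥ v ∈ colSpan U := hX ⟨v, rfl⟩
  rw [mulVecLin_apply] at hw
  simp only [← mulVec_mulVec, ← hw]
  rw [mulVec_mulVec (M := Uᵀ), hU, one_mulVec]

end ColSpan

theorem flag_2k_coordinates_general {k m : ℕ}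
    (A : Matrix (Fin k) (Fin k) ℝ) (hA : Aᵀ = -A)
    (B : Matrix (Fin m) (Fin k) ℝ)
    (H : Matrix (Fin k ⊕ Fin m) (Fin k ⊕ Fin m) ℝ)
    (hH : H = Matrix.fromBlocks A (-Bᵀ) B 0)
    (Ink : Matrix (Fin k ⊕ Fin m) (Fin k) ℝ)
    (hInk : Ink = Matrix.of fun i j => if i = Sum.inl j then (1 : ℝ) else 0)
    (q : ℝ → Matrix (Fin k ⊕ Fin m) (Fin k) ℝ)
    (hq : ∀ t, q t = NormedSpace.exp (t • H) * Ink)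
    (hdisj : colSpan (q 0) ⊓ colSpan (q 1) = ⊥)
    (U : Matrix (Fin k ⊕ Fin m) (Fin k ⊕ Fin k) ℝ)
    (R : Matrix (Fin k ⊕ Fin k) (Fin k ⊕ Fin k) ℝ)
    (hQR : Matrix.fromCols (q 0) (q 1) = U * R)
    (hUorth : Uᵀ * U = 1) :
    ∀ t ∈ Set.Icc (0 : ℝ) 1,
      U * (Uᵀ * q t) = q t ∧ (Uᵀ * q t)ᵀ * (Uᵀ * q t) = 1 := by
  rw [of_ite_eq_inl_eq_fromRows] at hInk
  subst hH hInk
  set K := fromCols (fromRows (1 : Matrix (Fin k) (Fin k) ℝ) 0) (fromRows A B)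
  have hE : fromRows 1 0 = K * (fromRows 1 0 : Matrix (Fin k ⊕ Fin k) (Fin k) ℝ) := by
    rw [fromCols_mul_fromRows, Matrix.mul_one, Matrix.mul_zero, add_zero]
  have hHK (t : ℝ) :
      (t • fromBlocks A (-Bᵀ) B 0) * K = K * (t • fromBlocks 0 (-(Bᵀ * B)) 1 A) := by
    rw [Matrix.smul_mul, Matrix.mul_smul, fromBlocks_mul_fromCols_fromRows]
  have horth (t : ℝ) : (q t)ᵀ * q t = 1 := by
    rw [hq t]
    refine transpose_mul_self_mul_eq_one (exp_transpose_mul_exp_of_transpose_eq_neg ?_) ?_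
    · rw [transpose_smul, fromBlocks_transpose_eq_neg hA, smul_neg]
    · simp [transpose_fromRows, fromCols_mul_fromRows]
  have hqK (t : ℝ) : colSpan (q t) ≤ colSpan K := by
    rw [hq t, hE]
    exact colSpan_exp_mul_le (hHK t) _
  have hKq : colSpan K ≤ colSpan (q 0) ⊔ colSpan (q 1) := by
    refine Submodule.le_sup_of_inf_eq_bot_of_finrank_le (hqK 0) (hqK 1) hdisj ?_
    simp only [finrank_colSpan, rank_eq_card_of_transpose_mul_self_eq_one (horth _)]
    simpa using K.rank_le_card_width
  have hU : colSpan (q 0) ⊔ colSpan (q 1) ≤ colSpan U :=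
    (colSpan_sup_colSpan_le_fromCols _ _).trans (hQR ▸ colSpan_mul_le U R)
  intro t _
  have hproj := mul_transpose_mul_eq_self_of_colSpan_le hUorth ((hqK t).trans (hKq.trans hU))
  exact ⟨hproj, by rw [transpose_mul, transpose_transpose, Matrix.mul_assoc, hproj, horth t]⟩

/-- Corollary of the 2k-embedding theorem: with
`[q(0), q(1)] = U R` a compact QR decomposition and trivially intersecting spans,
`φ(t) = Uᵀ q(t)` satisfies `U φ(t) = q(t)` and has orthonormal columns for all
`t ∈ [0,1]`. -/
theorem flag_2k_coordinates {k m : ℕ} (hk : 0 < k) (hkm : k < m)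
    (A : Matrix (Fin k) (Fin k) ℝ) (hA : Aᵀ = -A)
    (B : Matrix (Fin m) (Fin k) ℝ)
    (H : Matrix (Fin k ⊕ Fin m) (Fin k ⊕ Fin m) ℝ)
    (hH : H = Matrix.fromBlocks A (-Bᵀ) B 0)
    (Ink : Matrix (Fin k ⊕ Fin m) (Fin k) ℝ)
    (hInk : Ink = Matrix.of fun i j => if i = Sum.inl j then (1 : ℝ) else 0)
    (q : ℝ → Matrix (Fin k ⊕ Fin m) (Fin k) ℝ)
    (hq : ∀ t, q t = NormedSpace.exp (t • H) * Ink)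
    (hdisj : colSpan (q 0) ⊓ colSpan (q 1) = ⊥)
    (U : Matrix (Fin k ⊕ Fin m) (Fin k ⊕ Fin k) ℝ)
    (R : Matrix (Fin k ⊕ Fin k) (Fin k ⊕ Fin k) ℝ)
    (hQR : Matrix.fromCols (q 0) (q 1) = U * R)
    (hUorth : Uᵀ * U = 1) :
    ∀ t ∈ Set.Icc (0 : ℝ) 1,
      U * (Uᵀ * q t) = q t ∧ (Uᵀ * q t)ᵀ * (Uᵀ * q t) = 1 :=
  flag_2k_coordinates_general A hA B H hH Ink hInk q hq hdisj U R hQR hUorth
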